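/- arXiv:2501.11346 — 5 statements merged into one kernel-verified Lean document; each statement's English description precedes it below -/
import Mathlib

section
/- Descartes' rule of signs (upper bound form): for a nonzero real polynomial f, the number of strictly positive real roots of f, counted with multiplicity, is at most the number of sign changes in the sequence of nonzero coefficients of f. -/
/-! Mathlib proves the rule as `Polynomial.roots_countP_pos_le_signVariations` for
`Polynomial.signVariations`, which reads the signs of the coefficients from the leading one
down and counts the runs of equal nonzero signs, less one. Both counts are the number of
adjacent pairs of opposite sign among the nonzero coefficients, which does not depend on the
reading direction. -/

open scoped Classical

/-- The number of sign changes in the sequence of nonzero coefficients of a real polynomial. -/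
noncomputable def signChanges (p : Polynomial ℝ) : ℕ :=
  let l := ((List.range (p.natDegree + 1)).map p.coeff).filter (fun a => a ≠ 0)
  ((l.zip l.tail).filter (fun ab => ab.1 * ab.2 < 0)).length

theorem sign_ne_sign_iff_mul_neg {R : Type*} [Ring R] [LinearOrder R] [IsStrictOrderedRing R]
    {a b : R} (ha : a ≠ 0) (hb : b ≠ 0) : SignType.sign a ≠ SignType.sign b ↔ a * b < 0 := by
  rw [← sign_eq_neg_one_iff, sign_mul]
  rcases ha.lt_or_gt with ha | ha <;> rcases hb.lt_or_gt with hb | hb <;>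
    simp [sign_neg, sign_pos, ha, hb]

namespace List

variable {α : Type*}

theorem zip_tail_eq_zip_dropLast (l : List α) : l.zip l.tail = l.dropLast.zip l.tail := by
  induction l with
  | nil => rfl
  | cons a t ih =>
    cases t with
    | nil => rfl
    | cons b t => simp_all

theorem zip_reverse_tail_reverse (l : List α) :
    l.reverse.zip l.reverse.tail = ((l.zip l.tail).map Prod.swap).reverse := by
  rw [zip_tail_eq_zip_dropLast, zip_tail_eq_zip_dropLast, dropLast_reverse, tail_reverse,
    zip_swap, zip_eq_zipWith, zip_eq_zipWith, reverse_zipWith (by simp)]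

theorem length_filter_zip_tail_reverse {p : α × α → Bool} (hp : ∀ a b, p (a, b) = p (b, a))
    (l : List α) :
    ((l.reverse.zip l.reverse.tail).filter p).length = ((l.zip l.tail).filter p).length := by
  rw [zip_reverse_tail_reverse, filter_reverse, length_reverse, filter_map, length_map]
  congr 2
  ext ⟨a, b⟩
  exact hp b a

theorem length_destutter'_ne [DecidableEq α] (a : α) (l : List α) :
    (l.destutter' (· ≠ ·) a).length =
      (((a :: l).zip l).filter (fun ab => ab.1 ≠ ab.2)).length + 1 := by
  induction l generalizing a with
  | nil => rfl
  | cons b t ih =>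
    by_cases hab : a = b
    · subst hab
      simp [ih]
    · simp [hab, ih]

theorem length_destutter_ne_sub_one [DecidableEq α] (l : List α) :
    (l.destutter (· ≠ ·)).length - 1 = ((l.zip l.tail).filter (fun ab => ab.1 ≠ ab.2)).length := by
  cases l with
  | nil => rfl
  | cons a t => simp [destutter_cons', length_destutter'_ne]

theorem length_destutter_map_sign_sub_one {R : Type*} [Ring R] [LinearOrder R]
    [IsStrictOrderedRing R] {l : List R} (hl : ∀ a ∈ l, a ≠ 0) :
    ((l.map SignType.sign).destutter (· ≠ ·)).length - 1 =
      ((l.zip l.tail).filter (fun ab => ab.1 * ab.2 < 0)).length := by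
  rw [length_destutter_ne_sub_one, ← map_tail, zip_map, filter_map, length_map]
  congr 1
  apply filter_congr
  rintro ⟨a, b⟩ hab
  have hne := sign_ne_sign_iff_mul_neg (hl a (of_mem_zip hab).1)
    (hl b (mem_of_mem_tail (of_mem_zip hab).2))
  simp [← hne]

end List

open Polynomial

theorem signChanges_eq_signVariations (p : ℝ[X]) : signChanges p = p.signVariations := by
  rcases eq_or_ne p 0 with rfl | hp
  · simp [signChanges]
  set l := ((List.range (p.natDegree + 1)).map p.coeff).filter (fun a => a ≠ 0)
  have hsigns : (p.coeffList.map SignType.sign).filter (· ≠ 0) = l.reverse.map SignType.sign := by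
    simp only [coeffList, withBotSucc_degree_eq_natDegree_add_one hp, l, List.filter_map,
      ← List.map_reverse, List.filter_reverse, List.map_map]
    congr 2
    apply List.filter_congr
    simp
  have hl : ∀ a ∈ l.reverse, a ≠ 0 := fun a ha => by
    simpa using (List.mem_filter.mp (List.mem_reverse.mp ha)).2
  rw [signVariations, hsigns, List.length_destutter_map_sign_sub_one hl,
    List.length_filter_zip_tail_reverse (fun a b => by rw [mul_comm])]
  rfl

theorem descartes_rule_of_signs_general (p : Polynomial ℝ) :
    (p.roots.filter (fun x => 0 < x)).card ≤ signChanges p := by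
  rw [signChanges_eq_signVariations, ← Multiset.countP_eq_card_filter]
  exact roots_countP_pos_le_signVariations p

/-- Descartes' rule of signs (upper bound form): the number of strictly positive real roots
of a nonzero real polynomial, counted with multiplicity, is at most the number of sign
changes in its coefficient sequence. -/
theorem descartes_rule_of_signs (p : Polynomial ℝ) (hp : p ≠ 0) :
    (p.roots.filter (fun x => 0 < x)).card ≤ signChanges p :=
  descartes_rule_of_signs_general p
end

section
/- Let p(t) be a real polynomial and ν_p the number of sign changes in its coefficient sequence. If α > 0 is a root of p and p(t) = (t - α) q(t), then ν_q ≤ ν_p - 1. -/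
/-!
Put `c k = -α ^ k * (X * q).coeff k`. Then `α ^ k * p.coeff k = c (k + 1) - c k`, so the
coefficients of `p` carry the signs of the forward differences of `c`, while `c (k + 1)` carries
the sign of `-q.coeff k`. The sequence `c` vanishes at `0` and at `deg q + 2`. Along an alternating
run of `c`, each gap between consecutive points, and each gap between an end of the run and the
neighbouring zero of `c`, contains a difference of the sign of the telescoped sum over that gap
(a discrete Rolle theorem). So an alternating run of `ν_q + 1` coefficients of `q` yields one of
`ν_q + 2` coefficients of `p`.

The number of sign changes plus one is the length of the longest alternating subsequence of the
nonzero coefficients, which is what `List.destutter` computes.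
-/

open scoped Classical

open Polynomial

theorem List.IsChain.and {α : Type*} {R S : α → α → Prop} {l : List α} (hR : l.IsChain R)
    (hS : l.IsChain S) : l.IsChain fun a b => R a b ∧ S a b := by
  rw [List.isChain_iff_getElem] at *
  exact fun i hi => ⟨hR i hi, hS i hi⟩

theorem List.length_destutter'_ne_s3 {α : Type*} [DecidableEq α] (a : α) (l : List α) :
    (l.destutter' (· ≠ ·) a).length =
      (((a :: l).zip l).filter fun ab => ab.1 ≠ ab.2).length + 1 := by
  induction l generalizing a with
  | nil => rfl
  | cons b l ih =>
    by_cases hab : a = b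
    · subst hab
      simpa using ih a
    · simp [ih, hab]

theorem mul_neg_iff_sign_ne {R : Type*} [Ring R] [LinearOrder R] [IsStrictOrderedRing R]
    {a b : R} (ha : a ≠ 0) (hb : b ≠ 0) :
    a * b < 0 ↔ SignType.sign a ≠ SignType.sign b := by
  rcases ha.lt_or_gt with ha | ha <;> rcases hb.lt_or_gt with hb | hb <;>
    simp [ha, hb, sign_pos, sign_neg, mul_neg_iff, lt_asymm ha, lt_asymm hb]

theorem mul_neg_of_mul_pos_of_mul_neg {R : Type*} [CommRing R] [LinearOrder R]
    [IsStrictOrderedRing R] {x y z : R} (hxy : 0 < x * y) (hyz : y * z < 0) : x * z < 0 := by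
  have hy : 0 < y * y := mul_self_pos.mpr (right_ne_zero_of_mul hxy.ne')
  have : x * z * (y * y) < 0 := by
    calc x * z * (y * y) = x * y * (y * z) := by ring
      _ < 0 := mul_neg_of_pos_of_neg hxy hyz
  exact neg_of_mul_neg_left this hy.le

theorem mul_pos_of_mul_pos_of_mul_pos {R : Type*} [CommRing R] [LinearOrder R]
    [IsStrictOrderedRing R] {x y z : R} (hxy : 0 < x * y) (hyz : 0 < y * z) : 0 < x * z := by
  have hy : 0 < y * y := mul_self_pos.mpr (right_ne_zero_of_mul hxy.ne')
  have : 0 < x * z * (y * y) := by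
    calc 0 < x * y * (y * z) := mul_pos hxy hyz
      _ = x * z * (y * y) := by ring
  exact pos_of_mul_pos_left this hy.le

noncomputable def supportList (p : ℝ[X]) : List ℕ :=
  (List.range (p.natDegree + 1)).filter fun i => p.coeff i ≠ 0

theorem coeff_ne_zero_of_mem_supportList {p : ℝ[X]} {i : ℕ} (hi : i ∈ supportList p) :
    p.coeff i ≠ 0 := by
  simpa [supportList] using (List.mem_filter.mp hi).2

theorem sublist_supportList {p : ℝ[X]} {K : List ℕ} (hK : K.Pairwise (· < ·))
    (hnz : ∀ i ∈ K, p.coeff i ≠ 0) : K.Sublist (supportList p) := by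
  refine List.sublist_of_subperm_of_pairwise (List.subperm_of_subset (hK.imp ne_of_lt) ?_) hK
    (List.pairwise_lt_range.sublist List.filter_sublist)
  intro i hi
  simpa [supportList, Nat.lt_succ_iff] using ⟨le_natDegree_of_ne_zero (hnz i hi), hnz i hi⟩

theorem signChanges_add_one_eq_length_destutter {p : ℝ[X]} (hp : p ≠ 0) :
    signChanges p + 1 =
      (((supportList p).map fun i => SignType.sign (p.coeff i)).destutter (· ≠ ·)).length := by
  obtain ⟨i, s, hs⟩ : ∃ i s, supportList p = i :: s := by
    refine List.exists_cons_of_ne_nil (List.ne_nil_of_mem (a := p.natDegree) ?_)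
    simpa [supportList] using hp
  have hnz : ∀ j ∈ i :: s, p.coeff j ≠ 0 := hs ▸ fun _ => coeff_ne_zero_of_mem_supportList
  have hl : ((List.range (p.natDegree + 1)).map p.coeff).filter (fun a => a ≠ 0) =
      p.coeff i :: s.map p.coeff := by
    rw [List.filter_map, ← List.map_cons, ← hs]; rfl
  have hzip : ∀ {β : Type} (f : ℕ → β),
      (f i :: s.map f).zip (s.map f) = ((i :: s).zip s).map (Prod.map f f) := fun f => by
    rw [← List.zip_map]; rfl
  unfold signChanges
  simp only [hl, List.tail_cons]
  rw [hs, List.map_cons, List.destutter_cons', List.length_destutter'_ne_s3,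
    hzip, hzip fun i => SignType.sign (p.coeff i), List.filter_map, List.filter_map,
    List.length_map, List.length_map]
  congr 2
  refine List.filter_congr fun ij hij => decide_eq_decide.mpr ?_
  exact mul_neg_iff_sign_ne (hnz _ (List.of_mem_zip hij).1)
    (hnz _ (List.mem_cons_of_mem i (List.of_mem_zip hij).2))

def SignAlternatesAlong (f : ℕ → ℝ) (K : List ℕ) : Prop :=
  K.IsChain (fun i j => i < j ∧ f i * f j < 0) ∧ ∀ i ∈ K, f i ≠ 0

namespace SignAlternatesAlong

variable {f : ℕ → ℝ} {K : List ℕ}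

theorem pairwise_lt (h : SignAlternatesAlong f K) : K.Pairwise (· < ·) :=
  List.isChain_iff_pairwise.mp (h.1.imp fun _ _ => And.left)

theorem singleton {i : ℕ} (hi : f i ≠ 0) : SignAlternatesAlong f [i] :=
  ⟨List.isChain_singleton i, by simpa using hi⟩

theorem cons {i j : ℕ} (h : SignAlternatesAlong f (j :: K)) (hij : i < j) (hf : f i * f j < 0) :
    SignAlternatesAlong f (i :: j :: K) :=
  ⟨h.1.cons_cons ⟨hij, hf⟩,
    List.forall_mem_cons.mpr ⟨left_ne_zero_of_mul hf.ne, h.2⟩⟩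

theorem map {g : ℕ → ℕ} (hg : StrictMono g) (h : SignAlternatesAlong (f ∘ g) K) :
    SignAlternatesAlong f (K.map g) :=
  ⟨List.isChain_map g |>.mpr <| h.1.imp fun _ _ hij => ⟨hg hij.1, hij.2⟩, by
    simpa using h.2⟩

end SignAlternatesAlong

theorem signAlternatesAlong_mul_iff {w f : ℕ → ℝ} {K : List ℕ}
    (hw : ∀ i j, 0 < w i * w j) :
    SignAlternatesAlong (fun k => w k * f k) K ↔ SignAlternatesAlong f K := by
  have hw0 : ∀ i, w i ≠ 0 := fun i => mul_self_pos.mp (hw i i)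
  have hneg : ∀ i j, w i * f i * (w j * f j) < 0 ↔ f i * f j < 0 := fun i j => by
    rw [show w i * f i * (w j * f j) = w i * w j * (f i * f j) by ring, ← neg_pos, ← mul_neg,
      mul_pos_iff_of_pos_left (hw i j), neg_pos]
  simp only [SignAlternatesAlong, hneg, mul_ne_zero_iff, ne_eq, hw0, not_false_eq_true, true_and]

theorem SignAlternatesAlong.length_le_signChanges_add_one {p : ℝ[X]} {K : List ℕ}
    (hK : SignAlternatesAlong p.coeff K) : K.length ≤ signChanges p + 1 := by
  rcases K with _ | ⟨i, K⟩
  · simp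
  have hp : p ≠ 0 := fun h => hK.2 i List.mem_cons_self (by simp [h])
  set g : ℕ → SignType := fun i => SignType.sign (p.coeff i)
  have hchain : ((i :: K).map g).IsChain (· ≠ ·) :=
    (List.isChain_map g).mpr <| hK.1.imp fun a b hab =>
      (mul_neg_iff_sign_ne (left_ne_zero_of_mul hab.2.ne) (right_ne_zero_of_mul hab.2.ne)).mp hab.2
  calc (i :: K).length = ((i :: K).map g).length := (List.length_map _).symm
    _ ≤ _ :=
      hchain.length_le_length_destutter_ne ((sublist_supportList hK.pairwise_lt hK.2).map g)
    _ = signChanges p + 1 := (signChanges_add_one_eq_length_destutter hp).symm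

theorem exists_signAlternatesAlong_coeff {q : ℝ[X]} (hq : q ≠ 0) :
    ∃ J, SignAlternatesAlong q.coeff J ∧ J.length = signChanges q + 1 := by
  set g : ℕ → SignType := fun i => SignType.sign (q.coeff i)
  set J := (supportList q).destutter fun i j => g i ≠ g j
  have hsub : J.Sublist (supportList q) := List.destutter_sublist _ _
  have hnz : ∀ i ∈ J, q.coeff i ≠ 0 := fun i hi =>
    coeff_ne_zero_of_mem_supportList (hsub.subset hi)
  have hlt : J.IsChain (· < ·) :=
    (List.pairwise_lt_range.sublist (hsub.trans List.filter_sublist)).isChain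
  refine ⟨J, ⟨?_, hnz⟩, ?_⟩
  · exact (hlt.and (List.isChain_destutter _ _)).imp_of_mem_imp fun i j hi hj h =>
      ⟨h.1, (mul_neg_iff_sign_ne (hnz i hi) (hnz j hj)).mpr h.2⟩
  · rw [signChanges_add_one_eq_length_destutter hq,
      ← List.map_destutter (f := g) fun _ _ _ _ => Iff.rfl, List.length_map]

section DiscreteRolle

variable (c : ℕ → ℝ)

theorem exists_mem_Ico_fwdDiff_mul_pos {u v : ℕ} (huv : u ≤ v) (hc : c u ≠ c v) :
    ∃ k ∈ Finset.Ico u v, 0 < fwdDiff 1 c k * (c v - c u) := by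
  by_contra! h
  have hsum : (∑ k ∈ Finset.Ico u v, fwdDiff 1 c k) * (c v - c u) ≤ 0 := by
    rw [Finset.sum_mul]
    exact Finset.sum_nonpos h
  rw [show ∑ k ∈ Finset.Ico u v, fwdDiff 1 c k = c v - c u from Finset.sum_Ico_sub c huv]
    at hsum
  exact (mul_self_pos.mpr (sub_ne_zero.mpr hc.symm)).not_ge hsum

theorem exists_signAlternatesAlong_fwdDiff_cons {N : ℕ} (hN : c N = 0) (v : ℕ) (J : List ℕ)
    (hJ : SignAlternatesAlong c (v :: J)) (hJN : ∀ j ∈ v :: J, j < N) :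
    ∃ k K, SignAlternatesAlong (fwdDiff 1 c) (k :: K) ∧ K.length = J.length ∧ v ≤ k ∧
      fwdDiff 1 c k * c v < 0 := by
  induction J generalizing v with
  | nil =>
    obtain ⟨k, hk, hpos⟩ := exists_mem_Ico_fwdDiff_mul_pos c (hJN v List.mem_cons_self).le
      (by rw [hN]; exact hJ.2 v List.mem_cons_self)
    rw [Finset.mem_Ico] at hk
    exact ⟨k, [], .singleton (left_ne_zero_of_mul hpos.ne'), rfl, hk.1,
      by simpa [hN] using hpos⟩
  | cons w J ih =>
    obtain ⟨⟨hvw, hcvw⟩, htail⟩ := List.isChain_cons_cons.mp hJ.1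
    obtain ⟨k₁, K₁, hK₁, hlen, hwk₁, hk₁⟩ :=
      ih w ⟨htail, fun j hj => hJ.2 j (List.mem_cons_of_mem v hj)⟩
        fun j hj => hJN j (List.mem_cons_of_mem v hj)
    obtain ⟨k, hk, hpos⟩ := exists_mem_Ico_fwdDiff_mul_pos c hvw.le fun h =>
      (mul_self_nonneg (c w)).not_gt (h ▸ hcvw)
    rw [Finset.mem_Ico] at hk
    have hkw : 0 < fwdDiff 1 c k * c w :=
      mul_pos_of_mul_pos_of_mul_pos hpos (by nlinarith [mul_self_nonneg (c w)])
    refine ⟨k, k₁ :: K₁, hK₁.cons (by omega) ?_, by simp [hlen], hk.1, ?_⟩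
    · exact mul_neg_of_mul_pos_of_mul_neg hkw (mul_comm (fwdDiff 1 c k₁) (c w) ▸ hk₁)
    · exact mul_neg_of_mul_pos_of_mul_neg hkw (mul_comm (c v) (c w) ▸ hcvw)

theorem exists_signAlternatesAlong_fwdDiff {u N : ℕ} (hu : c u = 0) (hN : c N = 0)
    {J : List ℕ} (hJ : SignAlternatesAlong c J) (hJne : J ≠ []) (hJu : ∀ j ∈ J, u ≤ j)
    (hJN : ∀ j ∈ J, j < N) :
    ∃ K, SignAlternatesAlong (fwdDiff 1 c) K ∧ K.length = J.length + 1 := by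
  obtain ⟨v, J, rfl⟩ := List.exists_cons_of_ne_nil hJne
  obtain ⟨k, K, hK, hlen, hvk, hkv⟩ := exists_signAlternatesAlong_fwdDiff_cons c hN v J hJ hJN
  obtain ⟨k₀, hk₀, hpos⟩ := exists_mem_Ico_fwdDiff_mul_pos c (hJu v List.mem_cons_self)
    (by rw [hu]; exact (hJ.2 v List.mem_cons_self).symm)
  rw [Finset.mem_Ico] at hk₀
  rw [hu, sub_zero] at hpos
  refine ⟨k₀ :: k :: K, hK.cons (by omega) ?_, by simp [hlen]⟩
  exact mul_neg_of_mul_pos_of_mul_neg hpos (mul_comm (fwdDiff 1 c k) (c v) ▸ hkv)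

end DiscreteRolle

theorem pow_mul_coeff_X_sub_C_mul {R : Type*} [CommRing R] (α : R) (q : R[X]) (k : ℕ) :
    α ^ k * ((X - C α) * q).coeff k = fwdDiff 1 (fun j => -α ^ j * (X * q).coeff j) k := by
  simp only [fwdDiff, sub_mul, coeff_sub, coeff_C_mul, coeff_X_mul]
  ring

/-- If `α > 0` and `p(t) = (t - α) * q(t)` with `p ≠ 0`, then the number of sign changes of
`q` is at most the number of sign changes of `p` minus one. -/
theorem signChanges_of_factor_pos_root (p q : Polynomial ℝ) (α : ℝ) (hα : 0 < α)
    (hp : p ≠ 0) (hfac : p = (Polynomial.X - Polynomial.C α) * q) :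
    signChanges q + 1 ≤ signChanges p := by
  have hq : q ≠ 0 := right_ne_zero_of_mul (hfac ▸ hp)
  obtain ⟨J, hJ, hJlen⟩ := exists_signAlternatesAlong_coeff hq
  set c : ℕ → ℝ := fun j => -α ^ j * (X * q).coeff j
  have hcJ : SignAlternatesAlong c (J.map (· + 1)) := by
    refine .map (fun _ _ h => Nat.succ_lt_succ h) ?_
    have hc : c ∘ (· + 1) = fun j => -α ^ (j + 1) * q.coeff j := by
      funext j; simp [c, coeff_X_mul]
    rwa [hc, signAlternatesAlong_mul_iff fun i j => by rw [neg_mul_neg]; positivity]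
  obtain ⟨K, hK, hKlen⟩ := exists_signAlternatesAlong_fwdDiff c (u := 0) (N := q.natDegree + 2)
    (by simp [c]) (by simp [c, coeff_X_mul])
    hcJ (List.ne_nil_of_length_pos (by simp [hJlen])) (fun _ _ => Nat.zero_le _) (by
      simp only [List.mem_map]
      rintro _ ⟨i, hi, rfl⟩
      have := le_natDegree_of_ne_zero (hJ.2 i hi)
      omega)
  have hΔ : fwdDiff 1 c = fun k => α ^ k * p.coeff k := by
    funext k; rw [hfac, pow_mul_coeff_X_sub_C_mul]
  rw [hΔ, signAlternatesAlong_mul_iff fun i j => by positivity] at hK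
  have := hK.length_le_signChanges_add_one
  simp only [List.length_map] at hKlen
  omega
end

section
/- Suppose a formal power series h(t) = Σ a_n t^n with nonnegative integer coefficients satisfies h(t) = 1/p(t) for a polynomial p(t) ∈ ℤ[t] with p(0) = 1, and suppose p has a complex root that is not a root of unity. Then the partial sums Σ_{i=0}^n a_i are not bounded by any polynomial in n. -/
/-!
Polynomial growth of the partial sums makes `∑ aₙ wⁿ` converge on the open unit disk, where it
inverts `p`; so `p` has no root there. The Mahler measure `|lc p| ∏ max 1 |r|` then equals
`|lc p| ∏ |r| = |p(0)| = 1`, and by Kronecker's theorem every root of an integer polynomial of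
Mahler measure one is a root of unity.
-/

open Polynomial Finset

theorem PowerSeries.tsum_coeff_mul_pow_mul_eval_eq_one {R : Type*} [NormedCommRing R]
    [CompleteSpace R] {f : PowerSeries R} {p : R[X]} (hfp : f * p = 1) {w : R}
    (hf : Summable fun n ↦ ‖coeff n f * w ^ n‖) :
    (∑' n, coeff n f * w ^ n) * p.eval w = 1 := by
  have hp0 : ∀ n ∉ range (p.natDegree + 1), p.coeff n * w ^ n = 0 := fun n hn ↦ by
    rw [coeff_eq_zero_of_natDegree_lt (by simpa using hn), zero_mul]
  have hp : Summable fun n ↦ ‖p.coeff n * w ^ n‖ :=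
    summable_of_ne_finset_zero (s := range (p.natDegree + 1)) fun n hn ↦ by simp [hp0 n hn]
  have hpw : p.eval w = ∑' n, p.coeff n * w ^ n := by rw [eval_eq_sum_range, tsum_eq_sum hp0]
  have hcoeff : ∀ n, ∑ kl ∈ antidiagonal n, coeff kl.1 f * w ^ kl.1 * (p.coeff kl.2 * w ^ kl.2)
      = coeff n (f * (p : PowerSeries R)) * w ^ n := fun n ↦ by
    rw [coeff_mul, sum_mul]
    refine sum_congr rfl fun kl hkl ↦ ?_
    rw [← mem_antidiagonal.mp hkl, pow_add, Polynomial.coeff_coe]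
    ring
  rw [hpw, tsum_mul_tsum_eq_tsum_sum_antidiagonal_of_summable_norm hf hp]
  simp_rw [hcoeff, hfp, coeff_one]
  simp

theorem Polynomial.mahlerMeasure_eq_norm_coeff_zero {P : ℂ[X]} (h : ∀ z ∈ P.roots, 1 ≤ ‖z‖) :
    P.mahlerMeasure = ‖P.coeff 0‖ := by
  rw [mahlerMeasure_eq_leadingCoeff_mul_prod_roots,
    (IsAlgClosed.splits P).coeff_zero_eq_leadingCoeff_mul_prod_roots,
    Multiset.map_congr rfl fun z hz ↦ max_eq_right (h z hz)]
  simp only [norm_mul, norm_pow, norm_neg, norm_one, one_pow, one_mul]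
  exact congrArg _ (map_multiset_prod (normHom : ℂ →*₀ ℝ) P.roots).symm

theorem summable_mul_geometric_of_sum_range_le {a : ℕ → ℝ} (ha : ∀ n, 0 ≤ a n) {c : ℝ} {k : ℕ}
    (hbd : ∀ n, ∑ i ∈ range (n + 1), a i ≤ c * (n : ℝ) ^ k) {r : ℝ} (hr₀ : 0 ≤ r) (hr₁ : r < 1) :
    Summable fun n ↦ a n * r ^ n := by
  have hle : ∀ n, a n ≤ c * (n : ℝ) ^ k := fun n ↦
    (single_le_sum (fun i _ ↦ ha i) (self_mem_range_succ n)).trans (hbd n)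
  have hgeom : Summable fun n : ℕ ↦ c * ((n : ℝ) ^ k * r ^ n) :=
    (summable_pow_mul_geometric_of_norm_lt_one k (by rwa [Real.norm_of_nonneg hr₀])).mul_left c
  refine .of_nonneg_of_le (fun n ↦ by have := ha n; positivity) (fun n ↦ ?_) hgeom
  rw [← mul_assoc]
  exact mul_le_mul_of_nonneg_right (hle n) (by positivity)

/-- If `h(t) = Σ a_n t^n = 1/p(t)` has nonnegative integer coefficients, `p ∈ ℤ[t]`,
`p(0) = 1`, and `p` has a complex root that is not a root of unity, then the partial sums
`Σ_{i=0}^n a_i` are not bounded by any polynomial in `n`. -/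
theorem partial_sums_not_poly_bounded (p : Polynomial ℤ) (hp0 : p.coeff 0 = 1)
    (a : ℕ → ℤ) (ha : PowerSeries.mk a * (p : PowerSeries ℤ) = 1)
    (hnn : ∀ n, 0 ≤ a n)
    (hbad : ∃ z : ℂ, Polynomial.aeval z p = 0 ∧ ∀ k : ℕ, 0 < k → z ^ k ≠ 1) :
    ∀ (c : ℝ) (k : ℕ), ¬ ∀ n : ℕ,
      (∑ i ∈ Finset.range (n + 1), (a i : ℝ)) ≤ c * (n : ℝ) ^ k := by
  intro c k hbd
  obtain ⟨z, hz, hz_ne⟩ := hbad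
  set P := p.map (Int.castRingHom ℂ)
  have hroots : ∀ w ∈ P.roots, 1 ≤ ‖w‖ := by
    intro w hw
    by_contra! hw₁
    have hsum : Summable fun n ↦ ‖PowerSeries.coeff n (PowerSeries.map (Int.castRingHom ℂ)
        (PowerSeries.mk a)) * w ^ n‖ := by
      refine (summable_mul_geometric_of_sum_range_le (fun n ↦ Int.cast_nonneg (hnn n)) hbd
        (norm_nonneg w) hw₁).congr fun n ↦ ?_
      simp [abs_of_nonneg (Int.cast_nonneg (R := ℝ) (hnn n))]
    have hinv := PowerSeries.tsum_coeff_mul_pow_mul_eval_eq_one (p := P)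
      (by rw [polynomial_map_coe, ← map_mul, ha, map_one]) hsum
    rw [((mem_roots'.mp hw).2 : P.eval w = 0), mul_zero] at hinv
    exact zero_ne_one hinv
  have hM : P.mahlerMeasure = 1 := by
    simp [mahlerMeasure_eq_norm_coeff_zero hroots, P, hp0]
  have hp : p ≠ 0 := by rintro rfl; simp at hp0
  have hz₀ : z ≠ 0 := by rintro rfl; simp [aeval_def, eval₂_at_zero, hp0] at hz
  obtain ⟨n, hn, hzn⟩ := pow_eq_one_of_mahlerMeasure_eq_one hM hz₀ (mem_aroots.mpr ⟨hp, hz⟩)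
  exact hz_ne n hn hzn
end

section
/- Let p(t) = 1 - 2t + t^3 + t^4 - t^5 + t^7 - t^8 - t^9 + 2t^{11} - t^{12}. Then the coefficient sequence of p has exactly 7 sign changes, and all complex roots of p are roots of unity. -/
open scoped Classical

open Polynomial

/-- The number of sign changes in the sequence of nonzero coefficients of an integer
polynomial. -/
noncomputable def signChangesZ (p : Polynomial ℤ) : ℕ :=
  let l := ((List.range (p.natDegree + 1)).map p.coeff).filter (fun a => a ≠ 0)
  ((l.zip l.tail).filter (fun ab => ab.1 * ab.2 < 0)).length

set_option maxHeartbeats 1000000 in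
/-- The Fløystad–Vatne example: the polynomial
`p(t) = 1 - 2t + t^3 + t^4 - t^5 + t^7 - t^8 - t^9 + 2t^11 - t^12` has exactly `7` sign
changes in its coefficient sequence, and all its complex roots are roots of unity. -/
theorem floystad_vatne_example (p : Polynomial ℤ)
    (hp : p = 1 - 2 * X + X ^ 3 + X ^ 4 - X ^ 5 + X ^ 7 - X ^ 8 - X ^ 9
        + 2 * X ^ 11 - X ^ 12) :
    signChangesZ p = 7 ∧
      ∀ z : ℂ, Polynomial.aeval z p = 0 → ∃ k : ℕ, 0 < k ∧ z ^ k = 1 := by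
  constructor
  · have hl : ((List.range (p.natDegree + 1)).map p.coeff)
        = [1,-2,0,1,1,-1,0,1,-1,-1,0,2,-1] := by
      have hd : p.natDegree = 12 := by subst hp; compute_degree!
      rw [hd]; subst hp
      simp [List.range_succ, coeff_one, coeff_X]
    unfold signChangesZ
    rw [hl]
    norm_num [List.filter, List.zip]
  · intro z h
    have hf : -(z-1)^5 * (z+1) * (z^2+z+1) * (z^4+z^3+z^2+z+1) = 0 := by
      rw [hp] at h
      simp only [map_add, map_sub, map_mul, map_pow, map_one, map_ofNat, aeval_X] at h
      linear_combination h
    rcases mul_eq_zero.1 hf with h1 | h5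
    · rcases mul_eq_zero.1 h1 with h2 | h3
      · rcases mul_eq_zero.1 h2 with h4 | h6
        · refine ⟨1, one_pos, ?_⟩
          have h5' : (z - 1) ^ 5 = 0 := by linear_combination -h4
          have : z - 1 = 0 := pow_eq_zero_iff (by norm_num) |>.1 h5'
          linear_combination this
        · exact ⟨2, by norm_num, by linear_combination (z-1) * h6⟩
      · exact ⟨3, by norm_num, by linear_combination (z-1) * h3⟩
    · exact ⟨5, by norm_num, by linear_combination (z-1) * h5⟩
end

section
/- Let p(t) ∈ ℤ[t] with p(0) = 1 satisfy the Gorenstein symmetry t^l p(1/t) = (-1)^d p(t) where l = deg p, and suppose 1/p(t) is a power series with nonnegative coefficients whose growth is polynomial of degree exactly m - 1 (i.e., the multiplicity of 1 as root of p is m) and all roots of p are roots of unity. If l = d (the Koszul case) and m ≥ d - 1, then p(t) = (1-t)^d. -/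
open Polynomial


/-- Corollary 2.5 at the level of characteristic polynomials. Let `p ∈ ℤ[t]`, `p(0) = 1`,
`l = deg p`, with Gorenstein symmetry `t^l p(1/t) = (-1)^d p(t)`, `1/p` a power series with
nonnegative coefficients, multiplicity of `1` as a root equal to `m`, and all roots of `p`
roots of unity. If `l = d` and `m ≥ d - 1`, then `p(t) = (1-t)^d`. -/
theorem koszul_corollary (p : Polynomial ℤ) (d l m : ℕ)
    (hp0 : p.coeff 0 = 1) (hl : l = p.natDegree)
    (hsym : Polynomial.reflect l p = (-1) ^ d * p)
    (a : ℕ → ℤ) (ha : PowerSeries.mk a * (p : PowerSeries ℤ) = 1)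
    (hnn : ∀ n, 0 ≤ a n)
    (hmult : p.rootMultiplicity 1 = m)
    (hroots : ∀ z : ℂ, Polynomial.aeval z p = 0 → ∃ k : ℕ, 0 < k ∧ z ^ k = 1)
    (hld : l = d) (hm : d - 1 ≤ m) :
    p = (1 - Polynomial.X) ^ d := by
  have hp_ne : p ≠ 0 := fun h => by simp [h] at hp0
  have hdeg : p.natDegree = d := by omega
  have h4d : ((-1:ℤ) ^ d) * ((-1) ^ d) = 1 := by
    rw [← pow_add]; exact Even.neg_one_pow ⟨d, rfl⟩
  -- leading coefficient
  have hlead : p.coeff d = (-1) ^ d := by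
    have h1 := congrArg (fun q => Polynomial.coeff q d) hsym
    simp only [coeff_reflect, hld] at h1
    rw [revAt_le (le_refl d)] at h1
    simp only [Nat.sub_self, hp0] at h1
    have h2 : ((-1 : ℤ[X]) ^ d * p).coeff d = (-1)^d * p.coeff d := by
      rw [← C_1, ← C_neg, ← C_pow, coeff_C_mul]
    rw [h2] at h1
    linear_combination (-(-1:ℤ)^d) * h1 - p.coeff d * h4d
  -- factorization
  set q := p /ₘ (X - C 1) ^ m with hq
  have hfac : (X - C (1:ℤ)) ^ m * q = p := by
    rw [hq, ← hmult]; exact p.pow_mul_divByMonic_rootMultiplicity_eq 1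
  have hq1 : q.eval 1 ≠ 0 := by
    rw [hq, ← hmult]; exact eval_divByMonic_pow_rootMultiplicity_ne_zero 1 hp_ne
  have hq_ne : q ≠ 0 := fun h => by simp [h] at hq1
  have h4m : ((-1:ℤ) ^ m) * ((-1) ^ m) = 1 := by
    rw [← pow_add]; exact Even.neg_one_pow ⟨m, rfl⟩
  have hdq : m + q.natDegree = d := by
    have := natDegree_mul (pow_ne_zero m (X_sub_C_ne_zero (1:ℤ))) hq_ne
    rw [hfac, natDegree_pow, natDegree_X_sub_C, mul_one] at this
    omega
  have hev : (-1:ℤ)^m * q.eval 0 = 1 := by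
    have hev0 : p.eval 0 = 1 := by rw [← coeff_zero_eq_eval_zero, hp0]
    rw [← hfac] at hev0
    simpa using hev0
  have he0 : q.eval 0 = (-1:ℤ)^m := by
    linear_combination (-1:ℤ)^m * hev - q.eval 0 * h4m
  have hmd : m = d ∨ (m = d - 1 ∧ 1 ≤ d ∧ q.natDegree = 1) := by omega
  rcases hmd with h | ⟨h1, h2, h3⟩
  · -- q is a constant
    subst h
    have hq0 : q.natDegree = 0 := by omega
    have hqC : q = C (q.coeff 0) := eq_C_of_natDegree_eq_zero hq0
    rw [← hfac, hqC, coeff_zero_eq_eval_zero, he0]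
    rw [map_pow, map_neg, map_one, ← mul_pow]
    congr 1
    ring
  · -- contradiction case
    exfalso
    have hq1c : q.coeff 1 = (-1)^d := by
      have hlc := leadingCoeff_mul ((X - C (1:ℤ)) ^ m) q
      rw [hfac, Monic.leadingCoeff ((monic_X_sub_C (1:ℤ)).pow m), one_mul] at hlc
      have e1 : p.leadingCoeff = p.coeff d := by rw [← hdeg, coeff_natDegree]
      have e2 : q.leadingCoeff = q.coeff 1 := by rw [← h3, coeff_natDegree]
      rw [e1, hlead, e2] at hlc
      exact hlc.symm
    have hq0c : q.coeff 0 = (-1)^m := by rw [coeff_zero_eq_eval_zero, he0]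
    have hqform : q = C (q.coeff 1) * X + C (q.coeff 0) :=
      eq_X_add_C_of_natDegree_le_one (by omega)
    apply hq1
    rw [hqform]
    simp only [eval_add, eval_mul, eval_C, eval_X, mul_one, hq1c, hq0c]
    have hd : d = (d - 1) + 1 := by omega
    rw [hd, pow_succ, h1]
    ring
end
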